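/- Let α1, α2, β2 be nonzero real constants. For smooth functions τ, g : ℝ → ℝ define the vector fields on ℝ⁶ with coordinates (t,x,y,u,v,w): X(τ) = τ ∂t + (τ'/2)(x ∂x + y ∂y − u ∂u − v ∂v − 2w ∂w) + Φ(v ∂u − u ∂v) + (Φ_t/β2) ∂w with Φ(t,x,y) = −(x²/(8α1) + y²/(8α2)) τ''(t) and Φ_t = −(x²/(8α1) + y²/(8α2)) τ'''(t), and Y(g) = g ∂x − (x g'/(2α1))(v ∂u − u ∂v) − (x g''/(2β2 α1)) ∂w. Then the Lie bracket satisfies [X(τ), Y(g)] = Y(τ g' − (1/2) g τ'). -/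

import Mathlib

/-! Both generators are smooth, so the bracket is computed from their explicit directional
derivatives. Since `Y(g)` has no `∂t`-component, `τ''''` never enters, and after substituting the
fields into each other every component reduces to a polynomial identity in the coordinates and the
derivatives of `τ` and `g`, once the first two derivatives of `τ g' - g τ' / 2` are expanded. -/

noncomputable section

/-- ℝ⁶ with coordinates (t,x,y,u,v,w). -/
abbrev E6 : Type := ℝ × ℝ × ℝ × ℝ × ℝ × ℝ

/-- The Lie bracket of two smooth vector fields on ℝ⁶:
[V,W](p) = DW(p)·V(p) − DV(p)·W(p). -/
def lieBracket (V W : E6 → E6) : E6 → E6 :=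
  fun p => fderiv ℝ W p (V p) - fderiv ℝ V p (W p)

/-- The time-reparametrization symmetry generator X(τ) of the constant-coefficient
Davey–Stewartson system (coefficients p₁ = α₁, p₂ = α₂, q₂ = β₂, real form ψ = u+iv):
X(τ) = τ∂t + (τ'/2)(x∂x + y∂y − u∂u − v∂v − 2w∂w) + Φ(v∂u − u∂v) + (Φ_t/β₂)∂w,
where Φ = −(x²/(8α₁) + y²/(8α₂))τ''. -/
def Xgen (α1 α2 β2 : ℝ) (τ : ℝ → ℝ) : E6 → E6 := fun p =>
  ( τ p.1,
    (deriv τ p.1 / 2) * p.2.1,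
    (deriv τ p.1 / 2) * p.2.2.1,
    -(deriv τ p.1 / 2) * p.2.2.2.1
      + (-(p.2.1^2 / (8*α1) + p.2.2.1^2 / (8*α2)) * deriv (deriv τ) p.1) * p.2.2.2.2.1,
    -(-(p.2.1^2 / (8*α1) + p.2.2.1^2 / (8*α2)) * deriv (deriv τ) p.1) * p.2.2.2.1
      - (deriv τ p.1 / 2) * p.2.2.2.2.1,
    -(deriv τ p.1) * p.2.2.2.2.2
      + (-(p.2.1^2 / (8*α1) + p.2.2.1^2 / (8*α2)) * deriv (deriv (deriv τ)) p.1) / β2 )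

/-- The symmetry generator
Y(g) = g∂x − (xg'/(2α₁))(v∂u − u∂v) − (xg''/(2β₂α₁))∂w. -/
def Ygen (α1 β2 : ℝ) (g : ℝ → ℝ) : E6 → E6 := fun p =>
  ( 0,
    g p.1,
    0,
    -(p.2.1 * deriv g p.1 / (2*α1)) * p.2.2.2.2.1,
    (p.2.1 * deriv g p.1 / (2*α1)) * p.2.2.2.1,
    -(p.2.1 * deriv (deriv g) p.1 / (2*β2*α1)) )

/-- The symmetry generator W(m) = m(v∂u − u∂v) + (m'/β₂)∂w. -/
def Wgen (β2 : ℝ) (m : ℝ → ℝ) : E6 → E6 := fun p =>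
  ( 0, 0, 0,
    m p.1 * p.2.2.2.2.1,
    -(m p.1) * p.2.2.2.1,
    deriv m p.1 / β2 )

lemma ContDiff.differentiable_deriv_iterate {𝕜 F : Type*} [NontriviallyNormedField 𝕜]
    [NormedAddCommGroup F] [NormedSpace 𝕜 F] {f : 𝕜 → F} {n k : ℕ} (hf : ContDiff 𝕜 n f)
    (hk : k < n) : Differentiable 𝕜 (deriv^[k] f) := by
  simpa [iteratedDeriv_eq_iterate] using hf.differentiable_iteratedDeriv k (by exact_mod_cast hk)

theorem HasFDerivAt.div_const {𝕜 E : Type*} [NontriviallyNormedField 𝕜] [NormedAddCommGroup E]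
    [NormedSpace 𝕜 E] {f : E → 𝕜} {f' : E →L[𝕜] 𝕜} {x : E} (hf : HasFDerivAt f f' x) (c : 𝕜) :
    HasFDerivAt (fun y => f y / c) (c⁻¹ • f') x := by
  simpa only [div_eq_mul_inv] using hf.mul_const c⁻¹

section

variable {α1 α2 β2 : ℝ}

lemma fderiv_Ygen_apply {g : ℝ → ℝ} (hg : ContDiff ℝ 3 g) (t x y u v w : ℝ) (d : E6) :
    fderiv ℝ (Ygen α1 β2 g) (t, x, y, u, v, w) d =
      (0, deriv g t * d.1, 0,
        -((d.2.1 * deriv g t + x * deriv (deriv g) t * d.1) * v + x * deriv g t * d.2.2.2.2.1)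
          / (2 * α1),
        ((d.2.1 * deriv g t + x * deriv (deriv g) t * d.1) * u + x * deriv g t * d.2.2.2.1)
          / (2 * α1),
        -(d.2.1 * deriv (deriv g) t + x * deriv (deriv (deriv g)) t * d.1) / (2 * β2 * α1)) := by
  have hg₀ : Differentiable ℝ g := hg.differentiable_deriv_iterate (k := 0) (by norm_num)
  have hg₁ : Differentiable ℝ (deriv g) := hg.differentiable_deriv_iterate (k := 1) (by norm_num)
  have hg₂ : Differentiable ℝ (deriv (deriv g)) :=
    hg.differentiable_deriv_iterate (k := 2) (by norm_num)
  set p : E6 := (t, x, y, u, v, w)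
  have ht := (hasFDerivAt_id (𝕜 := ℝ) p).fst
  have hx := (hasFDerivAt_id (𝕜 := ℝ) p).snd.fst
  have hu := (hasFDerivAt_id (𝕜 := ℝ) p).snd.snd.snd.fst
  have hv := (hasFDerivAt_id (𝕜 := ℝ) p).snd.snd.snd.snd.fst
  have h₀ := (hg₀ t).hasDerivAt.comp_hasFDerivAt p ht
  have h₁ := (hg₁ t).hasDerivAt.comp_hasFDerivAt p ht
  have h₂ := (hg₂ t).hasDerivAt.comp_hasFDerivAt p ht
  have hYg : HasFDerivAt (Ygen α1 β2 g) _ p :=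
    (hasFDerivAt_const 0 p).prodMk <| h₀.prodMk <| (hasFDerivAt_const 0 p).prodMk <|
      ((((hx.mul h₁).div_const (2 * α1)).neg).mul hv).prodMk <|
      (((hx.mul h₁).div_const (2 * α1)).mul hu).prodMk <|
      ((hx.mul h₂).div_const (2 * β2 * α1)).neg
  rw [hYg.fderiv]
  ext <;> simp only [p, ContinuousLinearMap.prod_apply, ContinuousLinearMap.comp_apply,
    ContinuousLinearMap.coe_fst', ContinuousLinearMap.coe_snd', ContinuousLinearMap.id_apply,
    add_apply, neg_apply, smul_apply, zero_apply, Function.comp_apply, Pi.mul_apply, Pi.neg_apply,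
    id, smul_eq_mul] <;> ring

lemma fderiv_Xgen_apply {τ : ℝ → ℝ} (hτ : ContDiff ℝ 4 τ) (t x y u v w : ℝ) (d : E6) :
    fderiv ℝ (Xgen α1 α2 β2 τ) (t, x, y, u, v, w) d =
      (deriv τ t * d.1,
        (deriv (deriv τ) t * d.1 * x + deriv τ t * d.2.1) / 2,
        (deriv (deriv τ) t * d.1 * y + deriv τ t * d.2.2.1) / 2,
        -(deriv (deriv τ) t * d.1 * u + deriv τ t * d.2.2.2.1) / 2
          - ((x * d.2.1 / (4 * α1) + y * d.2.2.1 / (4 * α2)) * deriv (deriv τ) t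
              + (x ^ 2 / (8 * α1) + y ^ 2 / (8 * α2)) * deriv (deriv (deriv τ)) t * d.1) * v
          - (x ^ 2 / (8 * α1) + y ^ 2 / (8 * α2)) * deriv (deriv τ) t * d.2.2.2.2.1,
        ((x * d.2.1 / (4 * α1) + y * d.2.2.1 / (4 * α2)) * deriv (deriv τ) t
              + (x ^ 2 / (8 * α1) + y ^ 2 / (8 * α2)) * deriv (deriv (deriv τ)) t * d.1) * u
          + (x ^ 2 / (8 * α1) + y ^ 2 / (8 * α2)) * deriv (deriv τ) t * d.2.2.2.1
          - (deriv (deriv τ) t * d.1 * v + deriv τ t * d.2.2.2.2.1) / 2,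
        -(deriv (deriv τ) t * d.1 * w + deriv τ t * d.2.2.2.2.2)
          - ((x * d.2.1 / (4 * α1) + y * d.2.2.1 / (4 * α2)) * deriv (deriv (deriv τ)) t
              + (x ^ 2 / (8 * α1) + y ^ 2 / (8 * α2)) * deriv (deriv (deriv (deriv τ))) t * d.1)
            / β2) := by
  have hτ₀ : Differentiable ℝ τ := hτ.differentiable_deriv_iterate (k := 0) (by norm_num)
  have hτ₁ : Differentiable ℝ (deriv τ) := hτ.differentiable_deriv_iterate (k := 1) (by norm_num)
  have hτ₂ : Differentiable ℝ (deriv (deriv τ)) :=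
    hτ.differentiable_deriv_iterate (k := 2) (by norm_num)
  have hτ₃ : Differentiable ℝ (deriv (deriv (deriv τ))) :=
    hτ.differentiable_deriv_iterate (k := 3) (by norm_num)
  set p : E6 := (t, x, y, u, v, w)
  have ht := (hasFDerivAt_id (𝕜 := ℝ) p).fst
  have hx := (hasFDerivAt_id (𝕜 := ℝ) p).snd.fst
  have hy := (hasFDerivAt_id (𝕜 := ℝ) p).snd.snd.fst
  have hu := (hasFDerivAt_id (𝕜 := ℝ) p).snd.snd.snd.fst
  have hv := (hasFDerivAt_id (𝕜 := ℝ) p).snd.snd.snd.snd.fst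
  have hw := (hasFDerivAt_id (𝕜 := ℝ) p).snd.snd.snd.snd.snd
  have h₀ := (hτ₀ t).hasDerivAt.comp_hasFDerivAt p ht
  have h₁ := (hτ₁ t).hasDerivAt.comp_hasFDerivAt p ht
  have h₂ := (hτ₂ t).hasDerivAt.comp_hasFDerivAt p ht
  have h₃ := (hτ₃ t).hasDerivAt.comp_hasFDerivAt p ht
  have hS := ((hx.pow 2).div_const (8 * α1)).add ((hy.pow 2).div_const (8 * α2))
  have hXτ : HasFDerivAt (Xgen α1 α2 β2 τ) _ p :=
    h₀.prodMk <| ((h₁.div_const 2).mul hx).prodMk <| ((h₁.div_const 2).mul hy).prodMk <|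
      ((((h₁.div_const 2).neg).mul hu).add ((hS.neg.mul h₂).mul hv)).prodMk <|
      ((((hS.neg.mul h₂).neg).mul hu).sub ((h₁.div_const 2).mul hv)).prodMk <|
      ((h₁.neg).mul hw).add ((hS.neg.mul h₃).div_const β2)
  rw [hXτ.fderiv]
  ext <;> simp only [p, ContinuousLinearMap.prod_apply, ContinuousLinearMap.comp_apply,
    ContinuousLinearMap.coe_fst', ContinuousLinearMap.coe_snd', ContinuousLinearMap.id_apply,
    add_apply, sub_apply, neg_apply, smul_apply, Function.comp_apply, Pi.mul_apply, Pi.neg_apply,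
    Pi.add_apply, id, smul_eq_mul, nsmul_eq_mul] <;> ring

lemma deriv_mul_deriv_sub_half_mul_deriv {τ g : ℝ → ℝ} (hτ : ContDiff ℝ 2 τ) (hg : ContDiff ℝ 2 g) :
    deriv (fun t => τ t * deriv g t - 1 / 2 * g t * deriv τ t) =
      fun t => τ t * deriv (deriv g) t + 1 / 2 * deriv τ t * deriv g t
        - 1 / 2 * g t * deriv (deriv τ) t := by
  have hτ₀ : Differentiable ℝ τ := hτ.differentiable_deriv_iterate (k := 0) (by norm_num)
  have hτ₁ : Differentiable ℝ (deriv τ) := hτ.differentiable_deriv_iterate (k := 1) (by norm_num)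
  have hg₀ : Differentiable ℝ g := hg.differentiable_deriv_iterate (k := 0) (by norm_num)
  have hg₁ : Differentiable ℝ (deriv g) := hg.differentiable_deriv_iterate (k := 1) (by norm_num)
  funext t
  exact (((hτ₀ t).hasDerivAt.mul (hg₁ t).hasDerivAt).sub
    (((hg₀ t).hasDerivAt.const_mul (1 / 2)).mul (hτ₁ t).hasDerivAt)).deriv.trans (by ring)

lemma deriv_deriv_mul_deriv_sub_half_mul_deriv {τ g : ℝ → ℝ} (hτ : ContDiff ℝ 3 τ)
    (hg : ContDiff ℝ 3 g) :
    deriv (deriv (fun t => τ t * deriv g t - 1 / 2 * g t * deriv τ t)) =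
      fun t => τ t * deriv (deriv (deriv g)) t + 3 / 2 * deriv τ t * deriv (deriv g) t
        - 1 / 2 * g t * deriv (deriv (deriv τ)) t := by
  have hτ₀ : Differentiable ℝ τ := hτ.differentiable_deriv_iterate (k := 0) (by norm_num)
  have hτ₁ : Differentiable ℝ (deriv τ) := hτ.differentiable_deriv_iterate (k := 1) (by norm_num)
  have hτ₂ : Differentiable ℝ (deriv (deriv τ)) :=
    hτ.differentiable_deriv_iterate (k := 2) (by norm_num)
  have hg₀ : Differentiable ℝ g := hg.differentiable_deriv_iterate (k := 0) (by norm_num)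
  have hg₁ : Differentiable ℝ (deriv g) := hg.differentiable_deriv_iterate (k := 1) (by norm_num)
  have hg₂ : Differentiable ℝ (deriv (deriv g)) :=
    hg.differentiable_deriv_iterate (k := 2) (by norm_num)
  rw [deriv_mul_deriv_sub_half_mul_deriv (hτ.of_le (by norm_num)) (hg.of_le (by norm_num))]
  funext t
  exact ((((hτ₀ t).hasDerivAt.mul (hg₂ t).hasDerivAt).add
    (((hτ₁ t).hasDerivAt.const_mul (1 / 2)).mul (hg₁ t).hasDerivAt)).sub
    (((hg₀ t).hasDerivAt.const_mul (1 / 2)).mul (hτ₂ t).hasDerivAt)).deriv.trans (by ring)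

end

theorem X_Y_commutation_general
    (α1 α2 β2 : ℝ)
    (τ g : ℝ → ℝ)
    (hτ : ContDiff ℝ (⊤ : ℕ∞) τ) (hg : ContDiff ℝ (⊤ : ℕ∞) g) :
    lieBracket (Xgen α1 α2 β2 τ) (Ygen α1 β2 g)
      = Ygen α1 β2 (fun t => τ t * deriv g t - (1/2) * g t * deriv τ t) := by
  have hτ₄ : ContDiff ℝ 4 τ := hτ.of_le (WithTop.coe_le_coe.mpr le_top)
  have hg₃ : ContDiff ℝ 3 g := hg.of_le (WithTop.coe_le_coe.mpr le_top)
  funext ⟨t, x, y, u, v, w⟩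
  simp only [lieBracket, fderiv_Xgen_apply hτ₄, fderiv_Ygen_apply hg₃]
  simp only [Xgen, Ygen]
  rw [deriv_deriv_mul_deriv_sub_half_mul_deriv (hτ₄.of_le (by norm_num)) hg₃,
    deriv_mul_deriv_sub_half_mul_deriv (hτ₄.of_le (by norm_num)) (hg₃.of_le (by norm_num))]
  ext <;> simp only [Prod.fst_sub, Prod.snd_sub] <;> ring

/-- the Kac–Moody–Virasoro commutation relation
[X(τ), Y(g)] = Y(τg' − (1/2)gτ'). -/
theorem X_Y_commutation
    (α1 α2 β2 : ℝ) (hα1 : α1 ≠ 0) (hα2 : α2 ≠ 0) (hβ2 : β2 ≠ 0)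
    (τ g : ℝ → ℝ)
    (hτ : ContDiff ℝ (⊤ : ℕ∞) τ) (hg : ContDiff ℝ (⊤ : ℕ∞) g) :
    lieBracket (Xgen α1 α2 β2 τ) (Ygen α1 β2 g)
      = Ygen α1 β2 (fun t => τ t * deriv g t - (1/2) * g t * deriv τ t) :=
  X_Y_commutation_general α1 α2 β2 τ g hτ hg
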